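/- Let x, y₁, y₂ be points in a Euclidean cone (or locally Euclidean stratified space) with d(x,y₁) = d(x,y₂) = 1, and suppose there are orthogonal decompositions d²(y₁,y₂) = d²(y₁^∥, y₂^∥) + d²(y₁^⊥, y₂^⊥) with y_i^∥, y_i^⊥ at distances r_i^∥, r_i^⊥ from x satisfying (r_i^∥)² + (r_i^⊥)² = 1. Then cos(∠_x(y₁,y₂)) = cos θ₁ cos θ₂ cos(∠_x(y₁^∥,y₂^∥)) + sin θ₁ sin θ₂ cos(∠_x(y₁^⊥,y₂^⊥)), where sin θ_i = r_i^⊥. -/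

import Mathlib

open Set Real

/-- The Euclidean angle at x between u and v, via the law of cosines. -/
noncomputable def cosAng {M : Type*} [MetricSpace M] (x u v : M) : ℝ :=
  (dist x u ^ 2 + dist x v ^ 2 - dist u v ^ 2) / (2 * dist x u * dist x v)

section cosAng

variable {M : Type*} [MetricSpace M]

/-- Holds also when `u = x` or `v = x`: then both sides vanish, despite the junk value of
`cosAng`. -/
theorem two_mul_dist_mul_dist_mul_cosAng (x u v : M) :
    2 * dist x u * dist x v * cosAng x u v = dist x u ^ 2 + dist x v ^ 2 - dist u v ^ 2 := by
  rcases eq_or_ne x u with rfl | hu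
  · simp
  rcases eq_or_ne x v with rfl | hv
  · simp [dist_comm]
  exact mul_div_cancel₀ _ (by simp [hu, hv])

/-- The "inner product" `d(x,y₁) d(x,y₂) cos ∠_x(y₁,y₂)` is additive over orthogonal
decompositions. -/
theorem dist_mul_dist_mul_cosAng_eq_add {x y₁ y₂ y₁par y₂par y₁perp y₂perp : M}
    (hpyth₁ : dist x y₁ ^ 2 = dist x y₁par ^ 2 + dist x y₁perp ^ 2)
    (hpyth₂ : dist x y₂ ^ 2 = dist x y₂par ^ 2 + dist x y₂perp ^ 2)
    (hortho : dist y₁ y₂ ^ 2 = dist y₁par y₂par ^ 2 + dist y₁perp y₂perp ^ 2) :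
    dist x y₁ * dist x y₂ * cosAng x y₁ y₂ =
      dist x y₁par * dist x y₂par * cosAng x y₁par y₂par
        + dist x y₁perp * dist x y₂perp * cosAng x y₁perp y₂perp := by
  linear_combination (two_mul_dist_mul_dist_mul_cosAng x y₁ y₂
    - two_mul_dist_mul_dist_mul_cosAng x y₁par y₂par
    - two_mul_dist_mul_dist_mul_cosAng x y₁perp y₂perp + hpyth₁ + hpyth₂ - hortho) / 2

end cosAng

theorem Real.cos_eq_of_sin_eq_of_sq_add_sq_eq_one {θ a b : ℝ} (hθ : θ ∈ Icc (-(π / 2)) (π / 2))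
    (ha : 0 ≤ a) (hab : a ^ 2 + b ^ 2 = 1) (hsin : sin θ = b) : cos θ = a := by
  rw [cos_eq_sqrt_one_sub_sin_sq hθ.1 hθ.2, hsin, ← hab, add_sub_cancel_right, sqrt_sq ha]

theorem cosine_splitting_general
    {M : Type*} [MetricSpace M]
    (x y₁ y₂ y₁par y₂par y₁perp y₂perp : M)
    (r₁par r₂par r₁perp r₂perp θ₁ θ₂ : ℝ)
    (h₁ : dist x y₁ = 1) (h₂ : dist x y₂ = 1)
    (h₁par : dist x y₁par = r₁par) (h₂par : dist x y₂par = r₂par)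
    (h₁perp : dist x y₁perp = r₁perp) (h₂perp : dist x y₂perp = r₂perp)
    (hpyth₁ : r₁par ^ 2 + r₁perp ^ 2 = 1) (hpyth₂ : r₂par ^ 2 + r₂perp ^ 2 = 1)
    (hθ₁ : θ₁ ∈ Icc 0 (π / 2)) (hθ₂ : θ₂ ∈ Icc 0 (π / 2))
    (hsin₁ : Real.sin θ₁ = r₁perp) (hsin₂ : Real.sin θ₂ = r₂perp)
    (hortho : dist y₁ y₂ ^ 2 = dist y₁par y₂par ^ 2 + dist y₁perp y₂perp ^ 2) :
    cosAng x y₁ y₂ =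
      Real.cos θ₁ * Real.cos θ₂ * cosAng x y₁par y₂par
        + Real.sin θ₁ * Real.sin θ₂ * cosAng x y₁perp y₂perp := by
  have hcos₁ : cos θ₁ = r₁par := cos_eq_of_sin_eq_of_sq_add_sq_eq_one
    ⟨by linarith [hθ₁.1, pi_pos], hθ₁.2⟩ (h₁par ▸ dist_nonneg) hpyth₁ hsin₁
  have hcos₂ : cos θ₂ = r₂par := cos_eq_of_sin_eq_of_sq_add_sq_eq_one
    ⟨by linarith [hθ₂.1, pi_pos], hθ₂.2⟩ (h₂par ▸ dist_nonneg) hpyth₂ hsin₂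
  have hsplit := dist_mul_dist_mul_cosAng_eq_add
    (by rw [h₁, h₁par, h₁perp, hpyth₁, one_pow]) (by rw [h₂, h₂par, h₂perp, hpyth₂, one_pow])
    hortho
  rw [hcos₁, hcos₂, hsin₁, hsin₂, ← h₁par, ← h₂par, ← h₁perp, ← h₂perp, ← hsplit, h₁, h₂,
    one_mul, one_mul]

/-- Key computation for the spherical-join splitting of the space of directions:
given orthogonal decompositions of y₁, y₂ relative to x (with d(x,y₁)=d(x,y₂)=1),
cos ∠_x(y₁,y₂) = cos θ₁ cos θ₂ cos ∠_x(y₁^∥,y₂^∥) + sin θ₁ sin θ₂ cos ∠_x(y₁^⊥,y₂^⊥),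
where sin θᵢ = rᵢ^⊥ and (rᵢ^∥)² + (rᵢ^⊥)² = 1. -/
theorem cosine_splitting
    {M : Type*} [MetricSpace M]
    (x y₁ y₂ y₁par y₂par y₁perp y₂perp : M)
    (r₁par r₂par r₁perp r₂perp θ₁ θ₂ : ℝ)
    (h₁ : dist x y₁ = 1) (h₂ : dist x y₂ = 1)
    (h₁par : dist x y₁par = r₁par) (h₂par : dist x y₂par = r₂par)
    (h₁perp : dist x y₁perp = r₁perp) (h₂perp : dist x y₂perp = r₂perp)
    (hr₁par : 0 < r₁par) (hr₂par : 0 < r₂par)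
    (hr₁perp : 0 < r₁perp) (hr₂perp : 0 < r₂perp)
    (hpyth₁ : r₁par ^ 2 + r₁perp ^ 2 = 1) (hpyth₂ : r₂par ^ 2 + r₂perp ^ 2 = 1)
    (hθ₁ : θ₁ ∈ Icc 0 (π / 2)) (hθ₂ : θ₂ ∈ Icc 0 (π / 2))
    (hsin₁ : Real.sin θ₁ = r₁perp) (hsin₂ : Real.sin θ₂ = r₂perp)
    (hortho : dist y₁ y₂ ^ 2 = dist y₁par y₂par ^ 2 + dist y₁perp y₂perp ^ 2) :
    cosAng x y₁ y₂ =
      Real.cos θ₁ * Real.cos θ₂ * cosAng x y₁par y₂par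
        + Real.sin θ₁ * Real.sin θ₂ * cosAng x y₁perp y₂perp :=
  cosine_splitting_general x y₁ y₂ y₁par y₂par y₁perp y₂perp r₁par r₂par r₁perp r₂perp θ₁ θ₂ h₁ h₂
    h₁par h₂par h₁perp h₂perp hpyth₁ hpyth₂ hθ₁ hθ₂ hsin₁ hsin₂ hortho
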